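/- For any integer r ≥ 2 there exist a constant c > 0 and an integer v_0 such that for every integer v ≥ v_0 there exists a strictly r-sparse 4-cycle packing of order v with at least c·v² 4-cycles. -/

import Mathlib

/-!
Deletion method. There are `M = Θ(v ^ 4)` 4-cycles on `v` vertices; sample `n ≈ v ^ 2 / d` of
them. Every obstruction to being a strictly `r`-sparse packing (two 4-cycles sharing an edge or
forming a double-diamond, or a `(j + 3, j)`-configuration with `j ≤ r`) consists of some
`j ≤ r` cycles spanning at most `j + 4` vertices, so there are `O(v ^ (j + 4))` of them, each
contained in the sample with probability at most `(n / M) ^ j = O((d v ^ 2) ^ (-j))`. For `d`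
large the sample contains on average at most `n / (2 r)` obstructions; deleting all their cycles
from a sample that does no worse than average leaves a packing of at least `n / 2` cycles.
-/

open Finset

/-- The edge set of the 4-cycle `(a, b, c, d)`: edges {a,b}, {b,c}, {c,d}, {d,a}. -/
def cycEdges {V : Type*} [DecidableEq V] (a b c d : V) : Finset (Sym2 V) :=
  {s(a, b), s(b, c), s(c, d), s(d, a)}

/-- `E` is the edge set of a 4-cycle on four distinct vertices. -/
def IsFourCycle {V : Type*} [DecidableEq V] (E : Finset (Sym2 V)) : Prop :=
  ∃ a b c d : V, ([a, b, c, d] : List V).Nodup ∧ E = cycEdges a b c d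

/-- The set of vertices covered by a set of edges. -/
def edgeVerts {V : Type*} [DecidableEq V] (E : Finset (Sym2 V)) : Finset V :=
  E.sup (Sym2.lift ⟨fun x y => ({x, y} : Finset V), fun x y => Finset.pair_comm x y⟩)

/-- A `(k, l)`-configuration: a set of `l` pairwise edge-disjoint 4-cycles whose
union contains exactly `k` vertices. -/
def IsConfiguration {V : Type*} [DecidableEq V] (k l : ℕ)
    (D : Finset (Finset (Sym2 V))) : Prop :=
  D.card = l ∧ (∀ E ∈ D, IsFourCycle E) ∧
    (∀ E ∈ D, ∀ F ∈ D, E ≠ F → Disjoint E F) ∧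
    (D.sup edgeVerts).card = k

/-- `C` is a 4-cycle system: a collection of 4-cycles whose edge sets partition
the edge set of the complete graph on `V`. -/
def IsFourCycleSystem {V : Type*} [DecidableEq V] (C : Finset (Finset (Sym2 V))) : Prop :=
  (∀ E ∈ C, IsFourCycle E) ∧ ∀ e : Sym2 V, ¬ e.IsDiag → ∃! E, E ∈ C ∧ e ∈ E

/-- `C` is a 4-cycle packing: a set of pairwise edge-disjoint 4-cycles. -/
def IsFourCyclePacking {V : Type*} [DecidableEq V] (C : Finset (Finset (Sym2 V))) : Prop :=
  (∀ E ∈ C, IsFourCycle E) ∧ ∀ E ∈ C, ∀ F ∈ C, E ≠ F → Disjoint E F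

/-- `C` is `r`-sparse: it contains no `(j+3, j)`-configuration for `2 ≤ j ≤ r`. -/
def RSparse {V : Type*} [DecidableEq V] (r : ℕ) (C : Finset (Finset (Sym2 V))) : Prop :=
  ∀ j, 2 ≤ j → j ≤ r → ∀ D ⊆ C, ¬ IsConfiguration (j + 3) j D

/-- Two 4-cycles form a double-diamond: they are `(a,b,c,d)` and `(a,e,c,f)`,
sharing the diagonal {a,c}. -/
def IsDoubleDiamond {V : Type*} [DecidableEq V] (E F : Finset (Sym2 V)) : Prop :=
  ∃ a b c d e f : V, ([a, b, c, d, e, f] : List V).Nodup ∧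
    E = cycEdges a b c d ∧ F = cycEdges a e c f

/-- `C` is D-avoiding: no two of its 4-cycles form a double-diamond. -/
def DAvoiding {V : Type*} [DecidableEq V] (C : Finset (Finset (Sym2 V))) : Prop :=
  ∀ E ∈ C, ∀ F ∈ C, ¬ IsDoubleDiamond E F

/-- `C` is strictly `r`-sparse: `r`-sparse and D-avoiding. -/
def StrictlyRSparse {V : Type*} [DecidableEq V] (r : ℕ)
    (C : Finset (Finset (Sym2 V))) : Prop :=
  RSparse r C ∧ DAvoiding C

section Vertices

variable {V : Type*} [DecidableEq V]

lemma mem_edgeVerts {E : Finset (Sym2 V)} {x : V} : x ∈ edgeVerts E ↔ ∃ e ∈ E, x ∈ e := by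
  simp only [edgeVerts, Finset.mem_sup]
  refine exists_congr fun e => and_congr_right fun _ => ?_
  induction e using Sym2.ind with
  | _ p q => simp

lemma edgeVerts_cycEdges (a b c d : V) : edgeVerts (cycEdges a b c d) = {a, b, c, d} := by
  ext x
  simp only [mem_edgeVerts, cycEdges, Finset.mem_insert, Finset.mem_singleton]
  aesop

lemma IsFourCycle.card_edgeVerts_le {E : Finset (Sym2 V)} (hE : IsFourCycle E) :
    #(edgeVerts E) ≤ 4 := by
  obtain ⟨a, b, c, d, -, rfl⟩ := hE
  rw [edgeVerts_cycEdges]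
  exact Finset.card_le_four

lemma IsFourCycle.not_isDiag_of_mem {E : Finset (Sym2 V)} (hE : IsFourCycle E) {e : Sym2 V}
    (he : e ∈ E) : ¬ e.IsDiag := by
  obtain ⟨a, b, c, d, hnd, rfl⟩ := hE
  simp only [List.nodup_cons, List.mem_cons, List.not_mem_nil, or_false, List.nodup_nil] at hnd
  simp only [cycEdges, Finset.mem_insert, Finset.mem_singleton] at he
  rcases he with rfl | rfl | rfl | rfl <;> simp only [Sym2.mk_isDiag_iff] <;> tauto

lemma IsDoubleDiamond.ne {E F : Finset (Sym2 V)} (h : IsDoubleDiamond E F) : E ≠ F := by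
  obtain ⟨a, b, c, d, e, f, hnd, rfl, rfl⟩ := h
  intro hEF
  have hb : b ∈ edgeVerts (cycEdges a e c f) := by rw [← hEF, edgeVerts_cycEdges]; simp
  simp only [edgeVerts_cycEdges, Finset.mem_insert, Finset.mem_singleton] at hb
  simp only [List.nodup_cons, List.mem_cons, List.not_mem_nil, or_false, List.nodup_nil] at hnd
  tauto

lemma two_le_card_inter_edgeVerts {E F : Finset (Sym2 V)} (hE : IsFourCycle E)
    (h : ¬ Disjoint E F ∨ IsDoubleDiamond E F) : 2 ≤ #(edgeVerts E ∩ edgeVerts F) := by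
  suffices ∃ x y, x ≠ y ∧ x ∈ edgeVerts E ∩ edgeVerts F ∧ y ∈ edgeVerts E ∩ edgeVerts F by
    obtain ⟨x, y, hxy, hx, hy⟩ := this
    rw [← Finset.card_pair hxy]
    exact Finset.card_le_card (Finset.insert_subset hx (Finset.singleton_subset_iff.2 hy))
  rcases h with h | ⟨a, b, c, d, e, f, hnd, rfl, rfl⟩
  · obtain ⟨e, heE, heF⟩ := Finset.not_disjoint_iff.mp h
    have hdiag := hE.not_isDiag_of_mem heE
    induction e using Sym2.ind with
    | _ x y =>
      refine ⟨x, y, by simpa using hdiag, ?_, ?_⟩ <;>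
        exact Finset.mem_inter.2
          ⟨mem_edgeVerts.2 ⟨_, heE, by simp⟩, mem_edgeVerts.2 ⟨_, heF, by simp⟩⟩
  · simp only [List.nodup_cons, List.mem_cons, List.not_mem_nil, or_false, List.nodup_nil] at hnd
    exact ⟨a, c, by tauto, by simp [edgeVerts_cycEdges], by simp [edgeVerts_cycEdges]⟩

end Vertices

section Obstructions

variable {V : Type*} [DecidableEq V]

def IsObstruction (B : Finset (Finset (Sym2 V))) : Prop :=
  (∃ E F, E ≠ F ∧ B = {E, F} ∧ (¬ Disjoint E F ∨ IsDoubleDiamond E F)) ∨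
    (2 ≤ #B ∧ IsConfiguration (#B + 3) #B B)

lemma IsObstruction.two_le_card {B : Finset (Finset (Sym2 V))} (hB : IsObstruction B) :
    2 ≤ #B := by
  rcases hB with ⟨E, F, hEF, rfl, -⟩ | ⟨h, -⟩
  · rw [Finset.card_pair hEF]
  · exact h

lemma IsObstruction.card_sup_edgeVerts_le {B : Finset (Finset (Sym2 V))} (hB : IsObstruction B)
    (hcyc : ∀ E ∈ B, IsFourCycle E) : #(B.sup edgeVerts) ≤ #B + 4 := by
  rcases hB with ⟨E, F, hEF, rfl, h⟩ | ⟨-, -, -, -, hcard⟩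
  · have hE := hcyc E (by simp)
    have hF := hcyc F (by simp)
    have := Finset.card_union_add_card_inter (edgeVerts E) (edgeVerts F)
    have := two_le_card_inter_edgeVerts hE h
    rw [Finset.sup_insert, Finset.sup_singleton, Finset.sup_eq_union, Finset.card_pair hEF]
    have := hE.card_edgeVerts_le
    have := hF.card_edgeVerts_le
    omega
  · omega

lemma isFourCyclePacking_and_strictlyRSparse {r : ℕ} {D : Finset (Finset (Sym2 V))}
    (hr : 2 ≤ r) (hD : ∀ E ∈ D, IsFourCycle E)
    (hfree : ∀ B ⊆ D, #B ≤ r → ¬ IsObstruction B) :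
    IsFourCyclePacking D ∧ StrictlyRSparse r D := by
  have hpair : ∀ E ∈ D, ∀ F ∈ D, E ≠ F → ¬ (¬ Disjoint E F ∨ IsDoubleDiamond E F) :=
    fun E hE F hF hEF h => hfree {E, F} (Finset.insert_subset hE (by simpa using hF))
      (by rwa [Finset.card_pair hEF]) (Or.inl ⟨E, F, hEF, rfl, h⟩)
  refine ⟨⟨hD, fun E hE F hF hEF => ?_⟩, fun j hj hjr B hB hconf => ?_, fun E hE F hF hdd => ?_⟩
  · by_contra h
    exact hpair E hE F hF hEF (Or.inl h)
  · obtain rfl := hconf.1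
    exact hfree B hB hjr (Or.inr ⟨hj, hconf⟩)
  · exact hpair E hE F hF hdd.ne (Or.inr hdd)

end Obstructions

section Counting

variable (V : Type*) [Fintype V] [DecidableEq V]

open Classical in
noncomputable def fourCycles : Finset (Finset (Sym2 V)) :=
  Finset.univ.filter IsFourCycle

open Classical in
noncomputable def obstructions (r : ℕ) : Finset (Finset (Finset (Sym2 V))) :=
  (fourCycles V).powerset.filter fun B => #B ≤ r ∧ IsObstruction B

variable {V}

lemma mem_fourCycles {E : Finset (Sym2 V)} : E ∈ fourCycles V ↔ IsFourCycle E := by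
  simp [fourCycles]

lemma mem_obstructions {r : ℕ} {B : Finset (Finset (Sym2 V))} :
    B ∈ obstructions V r ↔ B ⊆ fourCycles V ∧ #B ≤ r ∧ IsObstruction B := by
  simp [obstructions]

lemma choose_four_le_card_fourCycles : (Fintype.card V).choose 4 ≤ #(fourCycles V) := by
  have hsub : Finset.univ.powersetCard 4 ⊆ (fourCycles V).image edgeVerts := by
    intro W hW
    obtain ⟨a, b, c, d, hab, hac, had, hbc, hbd, hcd, rfl⟩ :=
      Finset.card_eq_four.mp (Finset.mem_powersetCard.mp hW).2
    refine Finset.mem_image.2 ⟨cycEdges a b c d, mem_fourCycles.2 ⟨a, b, c, d, ?_, rfl⟩,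
      edgeVerts_cycEdges a b c d⟩
    simp [*]
  simpa using (Finset.card_le_card hsub).trans Finset.card_image_le

lemma card_filter_card_le_le (hV : 0 < Fintype.card V) (s : ℕ) :
    #{W : Finset V | #W ≤ s} ≤ (s + 1) * Fintype.card V ^ s := by
  have hsub : ({W : Finset V | #W ≤ s} : Finset _) ⊆
      (Finset.range (s + 1)).biUnion fun k => Finset.univ.powersetCard k := by
    intro W hW
    simp only [Finset.mem_filter, Finset.mem_univ, true_and] at hW
    exact Finset.mem_biUnion.2 ⟨#W, Finset.mem_range.2 (by omega),
      Finset.mem_powersetCard.2 ⟨Finset.subset_univ W, rfl⟩⟩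
  refine (Finset.card_le_card hsub).trans ?_
  refine (Finset.card_biUnion_le_card_mul _ _ _ fun k hk => ?_).trans_eq (by rw [Finset.card_range])
  rw [Finset.card_powersetCard, Finset.card_univ]
  exact (Nat.choose_le_pow _ k).trans
    (Nat.pow_le_pow_right hV (Nat.lt_succ_iff.1 (Finset.mem_range.1 hk)))

lemma card_filter_card_sup_edgeVerts_le (hV : 0 < Fintype.card V) (s : ℕ) :
    #{B : Finset (Finset (Sym2 V)) | #(B.sup edgeVerts) ≤ s}
      ≤ 2 ^ 2 ^ (s + 1) ^ 2 * ((s + 1) * Fintype.card V ^ s) := by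
  refine (Finset.card_le_mul_card_image_of_maps_to (f := fun B => B.sup edgeVerts)
    (t := {W : Finset V | #W ≤ s}) (by simp) _ fun W hW => ?_).trans
    (Nat.mul_le_mul_left _ (card_filter_card_le_le hV s))
  simp only [Finset.mem_filter, Finset.mem_univ, true_and] at hW
  have hsub : ({B : Finset (Finset (Sym2 V)) | #(B.sup edgeVerts) ≤ s} : Finset _).filter
      (fun B => B.sup edgeVerts = W) ⊆ W.sym2.powerset.powerset := by
    intro B hB
    simp only [Finset.mem_filter, Finset.mem_univ, true_and] at hB
    refine Finset.mem_powerset.2 fun E hE => Finset.mem_powerset.2 fun e he =>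
      Finset.mem_sym2_iff.2 fun x hx => hB.2 ▸ ?_
    exact Finset.le_sup (f := edgeVerts) hE (mem_edgeVerts.2 ⟨e, he, hx⟩)
  refine (Finset.card_le_card hsub).trans ?_
  rw [Finset.card_powerset, Finset.card_powerset, Finset.card_sym2]
  gcongr
  · norm_num
  · norm_num
  · exact (Nat.choose_le_pow _ _).trans (Nat.pow_le_pow_left (by omega) 2)

/-- An obstruction of size `j` spans at most `j + 4` vertices, so there are `O(v ^ (j + 4))`
of them. -/
def obstructionConst (r : ℕ) : ℕ := 2 ^ 2 ^ (r + 5) ^ 2 * (r + 5)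

lemma card_obstructions_filter_card_eq_le (hV : 0 < Fintype.card V) {r j : ℕ} (hjr : j ≤ r) :
    #{B ∈ obstructions V r | #B = j} ≤ obstructionConst r * Fintype.card V ^ (j + 4) := by
  have hsub : {B ∈ obstructions V r | #B = j} ⊆
      ({B : Finset (Finset (Sym2 V)) | #(B.sup edgeVerts) ≤ j + 4} : Finset _) := by
    intro B hB
    simp only [Finset.mem_filter, mem_obstructions] at hB
    obtain ⟨⟨hBU, -, hobs⟩, hBj⟩ := hB
    have := hobs.card_sup_edgeVerts_le fun E hE => mem_fourCycles.1 (hBU hE)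
    simp only [Finset.mem_filter, Finset.mem_univ, true_and]
    omega
  have h1 := Finset.card_le_card hsub
  have h2 := card_filter_card_sup_edgeVerts_le hV (j + 4)
  have h3 : 2 ^ 2 ^ (j + 4 + 1) ^ 2 * ((j + 4 + 1) * Fintype.card V ^ (j + 4)) ≤
      obstructionConst r * Fintype.card V ^ (j + 4) := by
    rw [obstructionConst, ← mul_assoc, show j + 4 + 1 = j + 5 by rfl]
    gcongr <;> omega
  exact h1.trans (h2.trans h3)

end Counting

section Deletion

variable {α : Type*} [DecidableEq α]

lemma sum_card_filter_subset_powersetCard (U : Finset α) (𝓑 : Finset (Finset α)) (n : ℕ)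
    (h𝓑 : ∀ B ∈ 𝓑, B ⊆ U ∧ #B ≤ n) :
    ∑ A ∈ U.powersetCard n, #{B ∈ 𝓑 | B ⊆ A} = ∑ B ∈ 𝓑, (#U - #B).choose (n - #B) := by
  simp_rw [Finset.card_filter]
  rw [Finset.sum_comm]
  refine Finset.sum_congr rfl fun B hB => ?_
  rw [← Finset.card_filter]
  exact Finset.card_filter_powersetCard_subset B U n (h𝓑 B hB).1 (h𝓑 B hB).2

lemma exists_subset_forall_not_subset (A : Finset α) (𝓑 : Finset (Finset α)) {r : ℕ}
    (h𝓑 : ∀ B ∈ 𝓑, B.Nonempty ∧ #B ≤ r) (h : 2 * r * #{B ∈ 𝓑 | B ⊆ A} ≤ #A) :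
    ∃ D ⊆ A, #A ≤ 2 * #D ∧ ∀ B ∈ 𝓑, ¬ B ⊆ D := by
  set hit := {B ∈ 𝓑 | B ⊆ A}
  refine ⟨A \ hit.biUnion id, Finset.sdiff_subset, ?_, fun B hB hBD => ?_⟩
  · have hdel : #(hit.biUnion id) ≤ #hit * r :=
      Finset.card_biUnion_le_card_mul _ _ _ fun B hB => (h𝓑 B (Finset.mem_filter.1 hB).1).2
    have := Finset.card_le_card_sdiff_add_card (s := A) (t := hit.biUnion id)
    nlinarith
  · obtain ⟨x, hx⟩ := (h𝓑 B hB).1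
    have hBA : B ⊆ A := hBD.trans Finset.sdiff_subset
    exact (Finset.mem_sdiff.1 (hBD hx)).2
      (Finset.mem_biUnion.2 ⟨B, Finset.mem_filter.2 ⟨hB, hBA⟩, hx⟩)

/-- The deletion method: the hypothesis says that a uniformly random `n`-subset of `U` contains
on average at most `n / (2 r)` members of `𝓑`. -/
lemma exists_subset_forall_not_subset_of_sum_choose_le (U : Finset α) (𝓑 : Finset (Finset α))
    {n r : ℕ} (hnU : n ≤ #U) (hrn : r ≤ n) (h𝓑 : ∀ B ∈ 𝓑, B ⊆ U ∧ B.Nonempty ∧ #B ≤ r)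
    (h : 2 * r * ∑ B ∈ 𝓑, (#U - #B).choose (n - #B) ≤ (#U).choose n * n) :
    ∃ D ⊆ U, n ≤ 2 * #D ∧ ∀ B ∈ 𝓑, ¬ B ⊆ D := by
  have hsum : ∑ A ∈ U.powersetCard n, 2 * r * #{B ∈ 𝓑 | B ⊆ A} ≤
      ∑ _A ∈ U.powersetCard n, n := by
    rw [← Finset.mul_sum, sum_card_filter_subset_powersetCard U 𝓑 n
      fun B hB => ⟨(h𝓑 B hB).1, (h𝓑 B hB).2.2.trans hrn⟩]
    simpa [Finset.card_powersetCard] using h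
  obtain ⟨A, hA, hAbad⟩ := Finset.exists_le_of_sum_le
    (Finset.powersetCard_nonempty.2 hnU) hsum
  obtain ⟨hAU, rfl⟩ := Finset.mem_powersetCard.1 hA
  obtain ⟨D, hDA, hD, hfree⟩ := exists_subset_forall_not_subset A 𝓑
    (fun B hB => (h𝓑 B hB).2) hAbad
  exact ⟨D, hDA.trans hAU, hD, hfree⟩

end Deletion

section Estimates

lemma choose_sub_mul_pow_le {M n j : ℕ} (hj : j ≤ n) (hn : n ≤ M) :
    (M - j).choose (n - j) * (M - j) ^ j ≤ M.choose n * n ^ j := by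
  calc (M - j).choose (n - j) * (M - j) ^ j
      ≤ (M - j).choose (n - j) * M.descFactorial j := by
        gcongr
        exact (Nat.pow_le_pow_left (by omega) j).trans (Nat.pow_sub_le_descFactorial M j)
    _ = j.factorial * (M.choose j * (M - j).choose (n - j)) := by
        rw [Nat.descFactorial_eq_factorial_mul_choose]; ring
    _ = M.choose n * n.descFactorial j := by
        rw [← Nat.choose_mul hj, Nat.descFactorial_eq_factorial_mul_choose]; ring
    _ ≤ M.choose n * n ^ j := Nat.mul_le_mul_left _ (Nat.descFactorial_le_pow n j)

lemma pow_four_add_le_choose_four {r v : ℕ} (hv : 125 * r + 6 ≤ v) :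
    v ^ 4 + 500 * r ≤ 500 * v.choose 4 := by
  have hdesc : (v - 3) ^ 4 ≤ 24 * v.choose 4 := by
    have h := Nat.pow_sub_le_descFactorial v 4
    rw [Nat.descFactorial_eq_factorial_mul_choose, show v + 1 - 4 = v - 3 by omega] at h
    simpa [Nat.factorial] using h
  have hhalf : v ^ 4 ≤ 16 * (v - 3) ^ 4 :=
    calc v ^ 4 ≤ (2 * (v - 3)) ^ 4 := Nat.pow_le_pow_left (by omega) 4
      _ = 16 * (v - 3) ^ 4 := by ring
  have hr : 125 * r ≤ (v - 3) ^ 4 := (show 125 * r ≤ v - 3 by omega).trans (Nat.le_self_pow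
    (by norm_num) _)
  omega

/-- Read `N` as the number of 4-cycles: `c v ^ (j + 4) (n / N) ^ j ≤ n` bounds, up to the
factor `c`, the expected number of size-`j` obstructions in a random `n`-sample. -/
lemma mul_pow_mul_pow_le {c r j v n N : ℕ} (hj : 2 ≤ j) (hjr : j ≤ r) (hv : 1 ≤ v)
    (hn : n * (c * 500 ^ (r + 1)) ≤ v ^ 2) (hN : v ^ 4 ≤ 500 * N) :
    c * v ^ (j + 4) * n ^ j ≤ n * N ^ j := by
  obtain ⟨i, rfl⟩ : ∃ i, j = i + 2 := ⟨j - 2, by omega⟩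
  rcases Nat.eq_zero_or_pos c with rfl | hc
  · simp
  set D := c * 500 ^ (r + 1)
  suffices key : c * v ^ (i + 6) * n ^ (i + 1) ≤ N ^ (i + 2) by
    calc c * v ^ (i + 2 + 4) * n ^ (i + 2) = n * (c * v ^ (i + 6) * n ^ (i + 1)) := by ring
      _ ≤ n * N ^ (i + 2) := Nat.mul_le_mul_left n key
  refine Nat.le_of_mul_le_mul_right (c := D ^ (i + 1) * 500 ^ (i + 2)) ?_ (by positivity)
  calc c * v ^ (i + 6) * n ^ (i + 1) * (D ^ (i + 1) * 500 ^ (i + 2))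
      = c * 500 ^ (i + 2) * v ^ (i + 6) * (n * D) ^ (i + 1) := by ring
    _ ≤ c * 500 ^ (i + 2) * v ^ (i + 6) * (v ^ 2) ^ (i + 1) := by gcongr
    _ = c * 500 ^ (i + 2) * v ^ (3 * i + 8) := by ring
    _ ≤ D * v ^ (4 * i + 8) := by
        gcongr ?_ * ?_
        · exact Nat.mul_le_mul_left c (Nat.pow_le_pow_right (by norm_num) (by omega))
        · exact Nat.pow_le_pow_right hv (by omega)
    _ ≤ D ^ (i + 1) * (v ^ 4) ^ (i + 2) := by
        rw [← pow_mul]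
        gcongr
        · exact Nat.le_self_pow (by omega) D
        · omega
    _ ≤ D ^ (i + 1) * (500 * N) ^ (i + 2) := by gcongr
    _ = N ^ (i + 2) * (D ^ (i + 1) * 500 ^ (i + 2)) := by ring

end Estimates

section Sampling

variable {V : Type*} [Fintype V] [DecidableEq V]

/-- `2 r ^ 2`: obstructions come in fewer than `r` sizes, each costs at most `r` deleted cycles,
and half of the sample must survive; `500 ^ (r + 1)` absorbs `M ≥ v ^ 4 / 500`. -/
def sampleDenom (r : ℕ) : ℕ := 2 * r ^ 2 * obstructionConst r * 500 ^ (r + 1)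

lemma sampleDenom_pos {r : ℕ} (hr : 0 < r) : 0 < sampleDenom r := by
  unfold sampleDenom obstructionConst
  positivity

lemma card_obstructions_mul_choose_le {r n j : ℕ} (hV : 125 * r + 6 ≤ Fintype.card V)
    (hj : j ∈ Finset.Icc 2 r) (hrn : r < n) (hn : n * sampleDenom r ≤ Fintype.card V ^ 2)
    (hnM : n ≤ #(fourCycles V)) :
    r * (2 * r * (#{B ∈ obstructions V r | #B = j} * (#(fourCycles V) - j).choose (n - j)))
      ≤ (#(fourCycles V)).choose n * n := by
  set M := #(fourCycles V)
  set v := Fintype.card V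
  obtain ⟨hj, hjr⟩ := Finset.mem_Icc.1 hj
  have hM : v ^ 4 + 500 * r ≤ 500 * M := (pow_four_add_le_choose_four hV).trans
    (Nat.mul_le_mul_left _ choose_four_le_card_fourCycles)
  have hcount := card_obstructions_filter_card_eq_le (V := V) (by omega) hjr
  have hchoose := choose_sub_mul_pow_le (M := M) (hjr.trans hrn.le) hnM
  have hexp := mul_pow_mul_pow_le (c := 2 * r ^ 2 * obstructionConst r) (N := M - j) hj hjr
    (by omega) hn (by omega)
  refine Nat.le_of_mul_le_mul_right (c := (M - j) ^ j) ?_ (Nat.pow_pos (by omega))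
  set X := #{B ∈ obstructions V r | #B = j}
  calc r * (2 * r * (X * (M - j).choose (n - j))) * (M - j) ^ j
      = 2 * r ^ 2 * X * ((M - j).choose (n - j) * (M - j) ^ j) := by ring
    _ ≤ 2 * r ^ 2 * (obstructionConst r * v ^ (j + 4)) * (M.choose n * n ^ j) := by gcongr
    _ = 2 * r ^ 2 * obstructionConst r * v ^ (j + 4) * n ^ j * M.choose n := by ring
    _ ≤ n * (M - j) ^ j * M.choose n := Nat.mul_le_mul_right _ hexp
    _ = M.choose n * n * (M - j) ^ j := by ring

lemma two_mul_sum_choose_obstructions_le {r n : ℕ} (hr : 0 < r)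
    (hV : 125 * r + 6 ≤ Fintype.card V) (hrn : r < n)
    (hn : n * sampleDenom r ≤ Fintype.card V ^ 2) (hnM : n ≤ #(fourCycles V)) :
    2 * r * ∑ B ∈ obstructions V r, (#(fourCycles V) - #B).choose (n - #B)
      ≤ (#(fourCycles V)).choose n * n := by
  set M := #(fourCycles V)
  have himage : (obstructions V r).image Finset.card ⊆ Finset.Icc 2 r := by
    intro j hj
    obtain ⟨B, hB, rfl⟩ := Finset.mem_image.1 hj
    obtain ⟨-, hBr, hobs⟩ := mem_obstructions.1 hB
    exact Finset.mem_Icc.2 ⟨hobs.two_le_card, hBr⟩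
  refine Nat.le_of_mul_le_mul_left ?_ hr
  rw [Finset.sum_comp (fun j => (M - j).choose (n - j)) Finset.card, Finset.mul_sum,
    Finset.mul_sum]
  calc ∑ j ∈ (obstructions V r).image Finset.card,
        r * (2 * r * (#{B ∈ obstructions V r | #B = j} • (M - j).choose (n - j)))
      ≤ ∑ _j ∈ (obstructions V r).image Finset.card, M.choose n * n :=
        Finset.sum_le_sum fun j hj =>
          card_obstructions_mul_choose_le hV (himage hj) hrn hn hnM
    _ ≤ r * (M.choose n * n) := by
        rw [Finset.sum_const, smul_eq_mul]
        gcongr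
        exact (Finset.card_le_card himage).trans (by simp)

lemma exists_large_obstruction_free {r n : ℕ} (hr : 0 < r) (hV : 125 * r + 6 ≤ Fintype.card V)
    (hrn : r < n) (hn : n * sampleDenom r ≤ Fintype.card V ^ 2) :
    ∃ D ⊆ fourCycles V, n ≤ 2 * #D ∧ ∀ B ⊆ D, #B ≤ r → ¬ IsObstruction B := by
  set v := Fintype.card V
  have hnM : n ≤ #(fourCycles V) := by
    have h500 : 500 * v ^ 2 ≤ v ^ 4 := by
      rw [show v ^ 4 = v ^ 2 * v ^ 2 by ring]
      exact Nat.mul_le_mul_right _ (by nlinarith)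
    have hM := (pow_four_add_le_choose_four hV).trans
      (Nat.mul_le_mul_left 500 (choose_four_le_card_fourCycles (V := V)))
    have : n ≤ v ^ 2 := (Nat.le_mul_of_pos_right n (sampleDenom_pos hr)).trans hn
    omega
  obtain ⟨D, hDU, hD, hfree⟩ := exists_subset_forall_not_subset_of_sum_choose_le
    (fourCycles V) (obstructions V r) hnM hrn.le
    (fun B hB => by
      obtain ⟨hBU, hBr, hobs⟩ := mem_obstructions.1 hB
      exact ⟨hBU, Finset.card_pos.1 (by linarith [hobs.two_le_card]), hBr⟩)
    (two_mul_sum_choose_obstructions_le hr hV hrn hn hnM)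
  exact ⟨D, hDU, hD, fun B hBD hBr hobs =>
    hfree B (mem_obstructions.2 ⟨hBD.trans hDU, hBr, hobs⟩) hBD⟩

end Sampling

/-- For any `r ≥ 2` there are `c > 0` and `v₀` such that every order `v ≥ v₀` admits a
strictly `r`-sparse 4-cycle packing with at least `c * v ^ 2` 4-cycles. -/
theorem exists_strictly_r_sparse_packing_quadratic (r : ℕ) (hr : 2 ≤ r) :
    ∃ c : ℝ, 0 < c ∧ ∃ v₀ : ℕ, ∀ v : ℕ, v₀ ≤ v →
      ∃ D : Finset (Finset (Sym2 (Fin v))),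
        IsFourCyclePacking D ∧ StrictlyRSparse r D ∧
          c * (v : ℝ) ^ 2 ≤ (D.card : ℝ) := by
  set d := sampleDenom r
  have hd : 0 < d := sampleDenom_pos (by omega)
  refine ⟨1 / (4 * d), by positivity, (r + 1) * d + 125 * r + 6, fun v hv => ?_⟩
  have hrn : r < v ^ 2 / d := (Nat.le_div_iff_mul_le hd).2 (by nlinarith)
  obtain ⟨D, hDU, hD, hfree⟩ := exists_large_obstruction_free (V := Fin v) (by omega)
    (by simp only [Fintype.card_fin]; omega) hrn (by simpa using Nat.div_mul_le_self (v ^ 2) d)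
  obtain ⟨hpacking, hsparse⟩ :=
    isFourCyclePacking_and_strictlyRSparse hr (fun E hE => mem_fourCycles.1 (hDU hE)) hfree
  refine ⟨D, hpacking, hsparse, ?_⟩
  have hv2 : v ^ 2 ≤ 4 * d * #D := by
    have := Nat.lt_mul_div_succ (v ^ 2) hd
    nlinarith
  rw [div_mul_eq_mul_div, one_mul, div_le_iff₀ (by positivity)]
  exact_mod_cast hv2.trans_eq (mul_comm _ _)
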